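/- arXiv:2204.07223 — 3 statements merged into one kernel-verified Lean document; each statement's English description precedes it below -/
import Mathlib

section
/- For any costs 0 < t_1 ≤ t_2 ≤ ⋯ ≤ t_n, the social cost of mechanism K is at most the social cost of mechanism P: ∑_{k=1}^n p_k^K t_k ≤ ∑_{k=1}^n p_k^P t_k. -/
/-!
Let `X_i` be independent and uniform on `[0, t_i]`. Then `p_k^K` is the probability that `X_k`
is the smallest of them, so the `p_k^K` sum to one, and
`p_k^K t_k = ∫_0^{t_1} ∏_{i ≠ k} (1 - x/t_i) dx` decreases in `k`, as does `1/t_k`. Chebyshev's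
sum inequality for these two similarly ordered sequences gives
`(∑ 1/t_k) · ∑ p_k^K t_k ≤ n · ∑ p_k^K = n`, and `n / ∑ 1/t_k` is the social cost of mechanism P.
-/

open MeasureTheory Finset

/-- Allocation probability of mechanism K for machine `k`, on sorted costs with `t 0` minimal:
`p_k^K = (1/t_k) · ∫_0^{t_1} ∏_{i ≠ k} (1 − x/t_i) dx`. -/
noncomputable def pK {n : ℕ} [NeZero n] (t : Fin n → ℝ) (k : Fin n) : ℝ :=
  (1 / t k) * ∫ x in (0:ℝ)..(t 0), ∏ i ∈ univ.erase k, (1 - x / t i)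

/-- Allocation probability of mechanism P for machine `k`:
`p_k^P = (1/t_k) / (∑_i 1/t_i)`. -/
noncomputable def pP {n : ℕ} (t : Fin n → ℝ) (k : Fin n) : ℝ :=
  (1 / t k) / (∑ i, 1 / t i)

section ProdErase

variable {ι : Type*} [Fintype ι] [DecidableEq ι]

theorem prod_erase_le_prod_erase_of_le {R : Type*} [CommSemiring R] [PartialOrder R]
    [IsOrderedRing R] {f : ι → R} (hf : ∀ i, 0 ≤ f i) {k l : ι} (hkl : f k ≤ f l) :
    ∏ i ∈ univ.erase l, f i ≤ ∏ i ∈ univ.erase k, f i := by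
  rcases eq_or_ne k l with rfl | hne
  · rfl
  rw [← mul_prod_erase _ f (mem_erase.2 ⟨hne, mem_univ k⟩),
    ← mul_prod_erase _ f (mem_erase.2 ⟨hne.symm, mem_univ l⟩), erase_right_comm]
  exact mul_le_mul_of_nonneg_right hkl (prod_nonneg fun i _ => hf i)

theorem hasDerivAt_prod_one_sub_div (t : ι → ℝ) (x : ℝ) :
    HasDerivAt (fun y => ∏ i, (1 - y / t i))
      (-∑ k, 1 / t k * ∏ i ∈ univ.erase k, (1 - x / t i)) x := by
  refine (HasDerivAt.fun_finsetProd (u := univ) fun i _ =>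
    ((hasDerivAt_id x).div_const (t i)).const_sub 1).congr_deriv ?_
  rw [← sum_neg_distrib]
  refine sum_congr rfl fun k _ => ?_
  simp only [id, smul_eq_mul]
  ring

theorem sum_one_div_mul_integral_prod_erase (t : ι → ℝ) (a : ℝ) :
    ∑ k, 1 / t k * ∫ x in (0 : ℝ)..a, ∏ i ∈ univ.erase k, (1 - x / t i) =
      1 - ∏ i, (1 - a / t i) := by
  simp_rw [← intervalIntegral.integral_const_mul]
  rw [← intervalIntegral.integral_finsetSum fun k _ =>
      Continuous.intervalIntegrable (by fun_prop) _ _,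
    ← neg_neg (∫ x in (0 : ℝ)..a, _), ← intervalIntegral.integral_neg,
    intervalIntegral.integral_eq_sub_of_hasDerivAt
      (fun x _ => hasDerivAt_prod_one_sub_div t x)
      (Continuous.intervalIntegrable (by fun_prop) _ _)]
  simp

theorem integral_prod_erase_le_of_le {t : ι → ℝ} {a : ℝ} (ha : 0 ≤ a) (hat : ∀ i, a ≤ t i)
    {k l : ι} (hk : 0 < t k) (hkl : t k ≤ t l) :
    ∫ x in (0 : ℝ)..a, ∏ i ∈ univ.erase l, (1 - x / t i) ≤
      ∫ x in (0 : ℝ)..a, ∏ i ∈ univ.erase k, (1 - x / t i) := by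
  refine intervalIntegral.integral_mono_on ha (Continuous.intervalIntegrable (by fun_prop) _ _)
    (Continuous.intervalIntegrable (by fun_prop) _ _) fun x ⟨hx0, hxa⟩ => ?_
  refine prod_erase_le_prod_erase_of_le (fun i => ?_) ?_
  · have := div_le_one_of_le₀ (hxa.trans (hat i)) (ha.trans (hat i))
    linarith
  · linarith [div_le_div_of_nonneg_left hx0 hk hkl]

end ProdErase

section Mechanisms

variable {n : ℕ} [NeZero n] {t : Fin n → ℝ}

theorem pK_mul_self {k : Fin n} (hk : t k ≠ 0) :
    pK t k * t k = ∫ x in (0 : ℝ)..t 0, ∏ i ∈ univ.erase k, (1 - x / t i) := by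
  rw [pK]
  field_simp

theorem sum_pK (h0 : t 0 ≠ 0) : ∑ k, pK t k = 1 := by
  have h : ∏ i, (1 - t 0 / t i) = 0 := prod_eq_zero (mem_univ 0) (by rw [div_self h0, sub_self])
  rw [← sub_zero 1, ← h, ← sum_one_div_mul_integral_prod_erase]
  rfl

theorem antitone_pK_mul_self (hpos : 0 < t 0) (hmono : Monotone t) :
    Antitone fun k => pK t k * t k := by
  have tpos k : 0 < t k := hpos.trans_le (hmono (Fin.zero_le k))
  intro k l hkl
  simp only [pK_mul_self (tpos _).ne']
  exact integral_prod_erase_le_of_le hpos.le (fun i => hmono (Fin.zero_le i)) (tpos k) (hmono hkl)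

end Mechanisms

theorem sum_pP_mul_self {n : ℕ} {t : Fin n → ℝ} (ht : ∀ k, t k ≠ 0) :
    ∑ k, pP t k * t k = n / ∑ i, 1 / t i := by
  have h k : pP t k * t k = 1 / ∑ i, 1 / t i := by
    rw [pP, div_mul_eq_mul_div, one_div_mul_cancel (ht k)]
  simp [h, div_eq_mul_inv]

theorem mechanismK_socialCost_le_mechanismP_general
    (n : ℕ) [NeZero n] (t : Fin n → ℝ)
    (hpos : 0 < t 0) (hmono : Monotone t) :
    ∑ k, pK t k * t k ≤ ∑ k, pP t k * t k := by
  have tpos k : 0 < t k := hpos.trans_le (hmono (Fin.zero_le k))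
  have hinv : Antitone fun k => 1 / t k := fun k l hkl =>
    one_div_le_one_div_of_le (tpos k) (hmono hkl)
  have hcheb := (hinv.monovary (antitone_pK_mul_self hpos hmono)).sum_mul_sum_le_card_mul_sum
  have hweights : ∑ k, 1 / t k * (pK t k * t k) = 1 := by
    refine (sum_congr rfl fun k _ => ?_).trans (sum_pK hpos.ne')
    field_simp [(tpos k).ne']
  have hS : 0 < ∑ i, 1 / t i := sum_pos (fun i _ => one_div_pos.2 (tpos i)) univ_nonempty
  rw [hweights, Fintype.card_fin, mul_one] at hcheb
  rw [sum_pP_mul_self fun k => (tpos k).ne', le_div_iff₀ hS, mul_comm]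
  exact hcheb

/-- For sorted costs `0 < t 0 ≤ ⋯ ≤ t (n-1)` (with `n ≥ 2`), the social cost of
mechanism K is at most the social cost of mechanism P: `∑_k p_k^K t_k ≤ ∑_k p_k^P t_k`. -/
theorem mechanismK_socialCost_le_mechanismP
    (n : ℕ) [NeZero n] (hn : 2 ≤ n) (t : Fin n → ℝ)
    (hpos : 0 < t 0) (hmono : Monotone t) :
    ∑ k, pK t k * t k ≤ ∑ k, pP t k * t k :=
  mechanismK_socialCost_le_mechanismP_general n t hpos hmono
end

section
/- Let s > 0, let ν be a probability distribution on [s, ∞), and let X_2, …, X_n (n ≥ 2) be independent random variables each distributed according to ν. Set μ = E_{X∼ν}[s/X] and assume 0 < μ < 1. Then the expected social cost of mechanism K on the input (s, X_2, …, X_n) is strictly between (s/μ)·(1 − 1/(n·μ)) and s/μ: (s/μ)(1 − 1/(nμ)) < E[ SC_K(s, X_2, …, X_n) ] < s/μ. -/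
/-!
For `x ∈ [0, s]` the integrand `∑ₖ ∏_{i ≠ k} (1 - x / Xᵢ)` of mechanism K is bounded, so
expectation and `∫₀ˢ` commute, and by independence its expectation factorises, with
`E[1 - x / Xᵢ] = 1 - μx/s` for `i ≠ 0`. With `n = m + 1` this gives
`E[SC_K] = ∫₀ˢ ((1 - μx/s)^m + m (1 - x/s) (1 - μx/s)^(m-1)) dx
        = (s/μ) (1 - (1 - μ) (1 - (1 - μ)^n) / (nμ))`,
and both bounds amount to `0 < (1 - μ) (1 - (1 - μ)^n) < 1`.
-/

open MeasureTheory ProbabilityTheory Finset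

/-- Social cost of mechanism K on a cost vector `t` (whose minimum is `⨅ i, t i`):
`SC_K(t) = ∑_k p_k^K · t_k` with `p_k^K = (1/t_k) · ∫_0^{min t} ∏_{i ≠ k} (1 − x/t_i) dx`. -/
noncomputable def SCK (n : ℕ) (t : Fin n → ℝ) : ℝ :=
  ∑ k, ((1 / t k) * ∫ x in (0:ℝ)..(⨅ i, t i), ∏ i ∈ univ.erase k, (1 - x / t i)) * t k

lemma ProbabilityTheory.iIndepFun.integral_finset_prod_comp {Ω ι 𝓧 : Type*}
    {mΩ : MeasurableSpace Ω} {P : Measure Ω} [MeasurableSpace 𝓧] {X : ι → Ω → 𝓧}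
    {f : ι → 𝓧 → ℝ} (hX : iIndepFun X P) (mX : ∀ i, Measurable (X i))
    (hf : ∀ i, Measurable (f i)) (S : Finset ι) :
    ∫ ω, ∏ i ∈ S, f i (X i ω) ∂P = ∏ i ∈ S, ∫ ω, f i (X i ω) ∂P := by
  have := (hX.precomp Subtype.val_injective (g := ((↑) : S → ι))).integral_fun_prod_comp
    (f := fun i : S => f i) (fun i => (mX i).aemeasurable) (fun i => (hf i).aestronglyMeasurable)
  simp_rw [← Finset.prod_coe_sort S]
  exact this

lemma integral_intervalIntegral_swap {Ω : Type*} {mΩ : MeasurableSpace Ω} {P : Measure Ω}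
    [IsFiniteMeasure P] {F : Ω → ℝ → ℝ} (hF : Measurable (Function.uncurry F)) {a b : ℝ}
    (hab : a ≤ b) {C : ℝ} (hC : ∀ᵐ ω ∂P, ∀ x ∈ Set.Ioc a b, |F ω x| ≤ C) :
    ∫ ω, (∫ x in a..b, F ω x) ∂P = ∫ x in a..b, ∫ ω, F ω x ∂P := by
  simp only [intervalIntegral.integral_of_le hab]
  refine integral_integral_swap (Integrable.of_bound hF.aestronglyMeasurable C ?_)
  rw [Measure.ae_prod_iff_ae_ae (measurableSet_le hF.norm measurable_const)]
  filter_upwards [hC] with ω hω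
  filter_upwards [ae_restrict_mem measurableSet_Ioc] with x hx
  exact hω x hx

lemma abs_prod_one_sub_div_le_one {ι : Type*} (S : Finset ι) {t : ι → ℝ} {x : ℝ} (hx : 0 ≤ x)
    (ht : ∀ i ∈ S, x ≤ t i) :
    |∏ i ∈ S, (1 - x / t i)| ≤ 1 := by
  have hle : ∀ i ∈ S, x / t i ≤ 1 := fun i hi => div_le_one_of_le₀ (ht i hi) (hx.trans (ht i hi))
  have hnonneg : ∀ i ∈ S, 0 ≤ x / t i := fun i hi => div_nonneg hx (hx.trans (ht i hi))
  rw [abs_of_nonneg (prod_nonneg fun i hi => sub_nonneg.2 (hle i hi))]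
  exact prod_le_one (fun i hi => sub_nonneg.2 (hle i hi))
    (fun i hi => sub_le_self _ (hnonneg i hi))

lemma SCK_eq_intervalIntegral {n : ℕ} {t : Fin n → ℝ} (ht : ∀ i, t i ≠ 0) :
    SCK n t = ∫ x in (0:ℝ)..(⨅ i, t i), ∑ k, ∏ i ∈ univ.erase k, (1 - x / t i) := by
  rw [intervalIntegral.integral_finsetSum fun k _ => by
    apply Continuous.intervalIntegrable; fun_prop]
  refine sum_congr rfl fun k _ => ?_
  field_simp [ht k]

lemma integral_one_sub_div {ν : Measure ℝ} [IsProbabilityMeasure ν]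
    (hν : Integrable (fun y => y⁻¹) ν) (x : ℝ) :
    ∫ y, (1 - x / y) ∂ν = 1 - x * ∫ y, y⁻¹ ∂ν := by
  simp only [div_eq_mul_inv]
  rw [integral_sub (integrable_const 1) (hν.const_mul x), integral_const, integral_const_mul]
  simp

lemma sum_prod_erase_ite_zero (m : ℕ) (a b : ℝ) :
    ∑ k : Fin (m + 1), ∏ i ∈ univ.erase k, (if i = 0 then a else b)
      = b ^ m + m * (a * b ^ (m - 1)) := by
  have h_const : ∀ S : Finset (Fin (m + 1)), 0 ∉ S →
      ∏ i ∈ S, (if i = 0 then a else b) = b ^ S.card := fun S hS => by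
    rw [prod_congr rfl fun i hi => if_neg (ne_of_mem_of_not_mem hi hS), prod_const]
  have h_succ : ∀ j : Fin m, ∏ i ∈ univ.erase j.succ, (if i = 0 then a else b)
      = a * b ^ (m - 1) := fun j => by
    have h0 : (0 : Fin (m + 1)) ∈ univ.erase j.succ :=
      mem_erase.2 ⟨(Fin.succ_ne_zero j).symm, mem_univ _⟩
    rw [← mul_prod_erase _ _ h0, if_pos rfl, h_const _ (notMem_erase 0 _),
      card_erase_of_mem h0, card_erase_of_mem (mem_univ _), card_univ, Fintype.card_fin]
    rfl
  rw [Fin.sum_univ_succ, h_const _ (notMem_erase 0 _), card_erase_of_mem (mem_univ _),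
    card_univ, Fintype.card_fin, sum_congr rfl fun j _ => h_succ j]
  simp

lemma integral_pow_add_mul_pow (m : ℕ) {s μ : ℝ} (hs : s ≠ 0) (hμ : μ ≠ 0) :
    ∫ x in (0:ℝ)..s, ((1 - μ / s * x) ^ m + m * ((1 - x / s) * (1 - μ / s * x) ^ (m - 1)))
      = s / μ * (1 - (1 - μ) * (1 - (1 - μ) ^ (m + 1)) / ((m + 1) * μ)) := by
  -- The integrand is `-(s/μ) d/dx[(1 - x/s) (1 - μx/s)^m] + (1 - 1/μ) (1 - μx/s)^m`.
  set F : ℝ → ℝ := fun x => -(s / μ) * ((1 - x / s) * (1 - μ / s * x) ^ m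
    + (μ - 1) / μ * (1 - μ / s * x) ^ (m + 1) / (m + 1))
  have hF : ∀ x, HasDerivAt F
      ((1 - μ / s * x) ^ m + m * ((1 - x / s) * (1 - μ / s * x) ^ (m - 1))) x := fun x => by
    have ha : HasDerivAt (fun x => 1 - x / s) (-(1 / s)) x := by
      simpa using ((hasDerivAt_id x).div_const s).const_sub 1
    have hb : HasDerivAt (fun x => 1 - μ / s * x) (-(μ / s)) x := by
      simpa using ((hasDerivAt_id x).const_mul (μ / s)).const_sub 1
    refine (((ha.mul (hb.fun_pow m)).add (((hb.fun_pow (m + 1)).const_mul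
      ((μ - 1) / μ)).div_const ((m : ℝ) + 1))).const_mul (-(s / μ))).congr_deriv ?_
    rw [Nat.add_sub_cancel]
    push_cast
    field_simp
    ring
  rw [intervalIntegral.integral_eq_sub_of_hasDerivAt (fun x _ => hF x)
    (Continuous.intervalIntegrable (by fun_prop) _ _)]
  simp only [F, div_self hs, div_mul_cancel₀ μ hs, sub_self, zero_div, mul_zero, sub_zero,
    one_pow, zero_mul, zero_add, mul_one]
  field_simp
  ring

lemma integral_SCK_eq_intervalIntegral {Ω : Type*} {mΩ : MeasurableSpace Ω} {P : Measure Ω}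
    [IsProbabilityMeasure P] (m : ℕ) {s : ℝ} (hs : 0 < s) {ν : Measure ℝ}
    [IsProbabilityMeasure ν] (hν : ν (Set.Iio s) = 0) {X : Fin (m + 1) → Ω → ℝ}
    (hX0 : ∀ ω, X 0 ω = s) (hmeas : ∀ i, Measurable (X i)) (hindep : iIndepFun X P)
    (hdist : ∀ i, i ≠ 0 → P.map (X i) = ν) :
    ∫ ω, SCK (m + 1) (fun i => X i ω) ∂P
      = ∫ x in (0:ℝ)..s, ((1 - (∫ y, y⁻¹ ∂ν) * x) ^ m
          + m * ((1 - x / s) * (1 - (∫ y, y⁻¹ ∂ν) * x) ^ (m - 1))) := by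
  have hνs : ∀ᵐ y ∂ν, s ≤ y := (measure_eq_zero_iff_ae_notMem.1 hν).mono fun _ h => not_lt.1 h
  have hXs : ∀ᵐ ω ∂P, ∀ i, s ≤ X i ω := by
    refine ae_all_iff.2 fun i => ?_
    rcases eq_or_ne i 0 with rfl | hi
    · exact .of_forall fun ω => (hX0 ω).ge
    · exact ae_of_ae_map (hmeas i).aemeasurable (hdist i hi ▸ hνs)
  have hinv : Integrable (fun y : ℝ => y⁻¹) ν := by
    refine Integrable.of_bound measurable_inv.aestronglyMeasurable s⁻¹ ?_
    filter_upwards [hνs] with y hy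
    rw [Real.norm_eq_abs, abs_of_pos (inv_pos.2 (hs.trans_le hy))]
    exact inv_anti₀ hs hy
  have hfactor : ∀ x i, ∫ ω, (1 - x / X i ω) ∂P
      = if i = 0 then 1 - x / s else 1 - (∫ y, y⁻¹ ∂ν) * x := fun x i => by
    rcases eq_or_ne i 0 with rfl | hi
    · simp [hX0]
    · rw [if_neg hi, ← integral_map (f := fun y => 1 - x / y) (hmeas i).aemeasurable
        (by fun_prop), hdist i hi, integral_one_sub_div hinv, mul_comm]
  calc ∫ ω, SCK (m + 1) (fun i => X i ω) ∂P
      = ∫ ω, (∫ x in (0:ℝ)..s, ∑ k, ∏ i ∈ univ.erase k, (1 - x / X i ω)) ∂P := by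
        refine integral_congr_ae ?_
        filter_upwards [hXs] with ω hω
        have hmin : (⨅ i, X i ω) = s :=
          le_antisymm ((ciInf_le (Finite.bddBelow_range _) 0).trans_eq (hX0 ω)) (le_ciInf hω)
        rw [SCK_eq_intervalIntegral fun i => (hs.trans_le (hω i)).ne', hmin]
    _ = ∫ x in (0:ℝ)..s, ∫ ω, ∑ k, ∏ i ∈ univ.erase k, (1 - x / X i ω) ∂P := by
        refine integral_intervalIntegral_swap (by fun_prop) hs.le (C := m + 1) ?_
        filter_upwards [hXs] with ω hω x hx
        refine (abs_sum_le_sum_abs _ _).trans ((sum_le_sum fun k _ =>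
          abs_prod_one_sub_div_le_one _ hx.1.le fun i _ => hx.2.trans (hω i)).trans ?_)
        simp
    _ = _ := by
        refine intervalIntegral.integral_congr fun x hx => ?_
        rw [Set.uIcc_of_le hs.le] at hx
        have hint : ∀ k, Integrable (fun ω => ∏ i ∈ univ.erase k, (1 - x / X i ω)) P := fun k =>
          Integrable.of_bound (Measurable.aestronglyMeasurable (by fun_prop)) 1
            (hXs.mono fun ω hω => abs_prod_one_sub_div_le_one _ hx.1 fun i _ => hx.2.trans (hω i))
        simp only [integral_finsetSum _ fun k _ => hint k, hfactor,
          hindep.integral_finset_prod_comp (f := fun _ y => 1 - x / y) hmeas (fun _ => by fun_prop)]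
        exact sum_prod_erase_ite_zero m _ _

theorem mechanismK_expected_socialCost_bounds_general
    {Ω : Type*} [MeasureSpace Ω] [IsProbabilityMeasure (ℙ : Measure Ω)]
    (n : ℕ) [NeZero n]
    (s : ℝ) (hs : 0 < s)
    (ν : Measure ℝ) [IsProbabilityMeasure ν] (hν : ν (Set.Iio s) = 0)
    (X : Fin n → Ω → ℝ) (hX0 : ∀ ω, X 0 ω = s)
    (hmeas : ∀ i, Measurable (X i))
    (hindep : iIndepFun X ℙ)
    (hdist : ∀ i : Fin n, i ≠ 0 → Measure.map (X i) ℙ = ν)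
    (μ : ℝ) (hμ : μ = ∫ x, s / x ∂ν) (hμ0 : 0 < μ) (hμ1 : μ < 1) :
    (s / μ) * (1 - 1 / ((n : ℝ) * μ)) < (∫ ω, SCK n (fun i => X i ω) ∂ℙ)
      ∧ (∫ ω, SCK n (fun i => X i ω) ∂ℙ) < s / μ := by
  obtain ⟨m, rfl⟩ := Nat.exists_eq_add_one_of_ne_zero (NeZero.ne n)
  have hc : ∫ y, y⁻¹ ∂ν = μ / s := by
    rw [hμ, eq_div_iff hs.ne', ← integral_mul_const]
    simp [div_eq_mul_inv, mul_comm]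
  rw [integral_SCK_eq_intervalIntegral m hs hν hX0 hmeas hindep hdist, hc,
    integral_pow_add_mul_pow m hs.ne' hμ0.ne']
  have hq : 0 < 1 - μ ∧ 1 - μ < 1 := ⟨by linarith, by linarith⟩
  have hqpow : 0 < 1 - (1 - μ) ^ (m + 1) ∧ 1 - (1 - μ) ^ (m + 1) ≤ 1 :=
    ⟨sub_pos.2 (pow_lt_one₀ hq.1.le hq.2 m.succ_ne_zero), sub_le_self _ (by positivity)⟩
  have hgap_pos : 0 < (1 - μ) * (1 - (1 - μ) ^ (m + 1)) := mul_pos hq.1 hqpow.1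
  have hgap_lt : (1 - μ) * (1 - (1 - μ) ^ (m + 1)) < 1 :=
    mul_lt_one_of_nonneg_of_lt_one_left hq.1.le hq.2 hqpow.2
  push_cast
  constructor
  · gcongr
  · exact mul_lt_of_lt_one_right (by positivity) (sub_lt_self _ (by positivity))

/-- For `s > 0`, a probability distribution `ν` on `[s, ∞)`, and independent
`X_2, …, X_n ∼ ν` (with `n ≥ 2`), setting `μ = E_{X∼ν}[s/X] ∈ (0,1)`, the expected social cost
of mechanism K on the input `(s, X_2, …, X_n)` satisfies
`(s/μ)(1 − 1/(nμ)) < E[SC_K] < s/μ`. -/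
theorem mechanismK_expected_socialCost_bounds
    {Ω : Type*} [MeasureSpace Ω] [IsProbabilityMeasure (ℙ : Measure Ω)]
    (n : ℕ) [NeZero n] (hn : 2 ≤ n)
    (s : ℝ) (hs : 0 < s)
    (ν : Measure ℝ) [IsProbabilityMeasure ν] (hν : ν (Set.Iio s) = 0)
    (X : Fin n → Ω → ℝ) (hX0 : ∀ ω, X 0 ω = s)
    (hmeas : ∀ i, Measurable (X i))
    (hindep : iIndepFun X ℙ)
    (hdist : ∀ i : Fin n, i ≠ 0 → Measure.map (X i) ℙ = ν)
    (μ : ℝ) (hμ : μ = ∫ x, s / x ∂ν) (hμ0 : 0 < μ) (hμ1 : μ < 1) :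
    (s / μ) * (1 - 1 / ((n : ℝ) * μ)) < (∫ ω, SCK n (fun i => X i ω) ∂ℙ)
      ∧ (∫ ω, SCK n (fun i => X i ω) ∂ℙ) < s / μ :=
  mechanismK_expected_socialCost_bounds_general n s hs ν hν X hX0 hmeas hindep hdist μ hμ hμ0 hμ1
end

section
/- As n → ∞, the average-case approximation ratio of mechanism P has limit inferior at least ( ∑_{j=1}^m (E_{t∼D^j}[1/t])^{-1} ) / ( ∑_{j=1}^m t^j_min ): liminf_{n→∞} r_n(P) ≥ (∑_j (E_{t∼D^j}[1/t])^{-1}) / (∑_j t^j_min). -/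
/-!
On task `j` mechanism P pays the harmonic mean of the costs, the inverse of the empirical mean of
`1 / t_i^j`, which tends almost surely to `(E[1/t])⁻¹` by the strong law of large numbers. The
optimum `min_i t_i^j` tends almost surely to `t^j_min`: every interval `[t^j_min, t^j_min + δ]`
has positive probability, so by the second Borel–Cantelli lemma some machine lands in it. Hence the
ratio converges almost surely to the claimed bound, and Fatou's lemma bounds the `liminf` of its
expectations from below.

Fatou's lemma needs the expectations to stay bounded (the `liminf` of a real sequence tending to
`∞` is a junk value). The ratio never exceeds `n`, and by Chebyshev's inequality, except with
probability `O(1 / n)`, at least `p n / 2` machines of task `j` cost at most `c = t^j_min + 1`,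
where `p = P(t ≤ c)`; on that event the harmonic mean is at most `2 c / p`.
-/

open MeasureTheory ProbabilityTheory Finset Filter

/-- Social cost of mechanism P on a cost vector `t`:
`SC_P(t) = ∑_k p_k^P t_k = n / (∑_k 1/t_k)` where `p_k^P = (1/t_k) / (∑_i 1/t_i)`. -/
noncomputable def SCP (n : ℕ) (t : Fin n → ℝ) : ℝ :=
  (n : ℝ) / (∑ k, 1 / t k)

open Set Topology

section HarmonicMean

variable {n : ℕ} {t : Fin n → ℝ}

lemma SCP_nonneg (ht : ∀ i, 0 ≤ t i) : 0 ≤ SCP n t :=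
  div_nonneg n.cast_nonneg (sum_nonneg fun i _ ↦ one_div_nonneg.2 (ht i))

lemma SCP_le_mul_iInf (ht : ∀ i, 0 < t i) : SCP n t ≤ n * ⨅ i, t i := by
  rcases Nat.eq_zero_or_pos n with rfl | hn
  · simp [SCP]
  have : Nonempty (Fin n) := ⟨⟨0, hn⟩⟩
  obtain ⟨k, hk⟩ := exists_eq_ciInf_of_finite (f := t)
  rw [← hk]
  calc SCP n t ≤ n / (1 / t k) :=
        div_le_div_of_nonneg_left n.cast_nonneg (one_div_pos.2 (ht k))
          (single_le_sum (fun i _ ↦ (one_div_pos.2 (ht i)).le) (mem_univ k))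
    _ = n * t k := by rw [one_div, div_inv_eq_mul]

lemma SCP_le_of_sum_indicator_pos (ht : ∀ i, 0 < t i) {c : ℝ} (hc : 0 < c)
    (hN : 0 < ∑ i, (Iic c).indicator (1 : ℝ → ℝ) (t i)) :
    SCP n t ≤ n * c / ∑ i, (Iic c).indicator (1 : ℝ → ℝ) (t i) := by
  have hS : (∑ i, (Iic c).indicator (1 : ℝ → ℝ) (t i)) / c ≤ ∑ i, 1 / t i := by
    rw [sum_div]
    refine sum_le_sum fun i _ ↦ ?_
    by_cases hi : t i ≤ c
    · rw [indicator_of_mem (Set.mem_Iic.2 hi), Pi.one_apply]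
      exact one_div_le_one_div_of_le (ht i) hi
    · rw [indicator_of_notMem (fun h ↦ hi (Set.mem_Iic.1 h)), zero_div]
      exact (one_div_pos.2 (ht i)).le
  calc SCP n t ≤ n / ((∑ i, (Iic c).indicator (1 : ℝ → ℝ) (t i)) / c) :=
        div_le_div_of_nonneg_left n.cast_nonneg (div_pos hN hc) hS
    _ = _ := div_div_eq_mul_div _ _ _

lemma SCP_div_le {c p T d : ℝ} (ht : ∀ i, 0 < t i) (hc : 0 < c) (hp : 0 < p) (hT : 0 < T)
    (hTd : T ≤ d) (hd : ⨅ i, t i ≤ d) :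
    SCP n t / d ≤ 2 * c / (p * T) +
      (Iic (p * n / 2)).indicator (fun _ ↦ (n : ℝ)) (∑ i, (Iic c).indicator (1 : ℝ → ℝ) (t i)) := by
  set N := ∑ i, (Iic c).indicator (1 : ℝ → ℝ) (t i)
  have hd0 : 0 < d := hT.trans_le hTd
  by_cases hN : N ≤ p * n / 2
  · rw [indicator_of_mem (Set.mem_Iic.2 hN)]
    calc SCP n t / d ≤ n := by
          rw [div_le_iff₀ hd0]
          exact (SCP_le_mul_iInf ht).trans (mul_le_mul_of_nonneg_left hd n.cast_nonneg)
      _ ≤ 2 * c / (p * T) + n := le_add_of_nonneg_left (by positivity)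
  · rw [indicator_of_notMem (fun h ↦ hN (Set.mem_Iic.1 h))]
    rw [not_le] at hN
    have hN0 : 0 < N := (by positivity : (0 : ℝ) ≤ p * n / 2).trans_lt hN
    calc SCP n t / d ≤ SCP n t / T :=
          div_le_div_of_nonneg_left (SCP_nonneg fun i ↦ (ht i).le) hT hTd
      _ ≤ n * c / N / T := by gcongr; exact SCP_le_of_sum_indicator_pos ht hc hN0
      _ ≤ 2 * c / p / T := by
          refine div_le_div_of_nonneg_right ?_ hT.le
          rw [div_le_div_iff₀ hN0 hp]
          nlinarith
      _ = 2 * c / (p * T) + 0 := by rw [div_div, add_zero]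

end HarmonicMean

lemma SCP_eq_inv_average (n : ℕ) (y : ℕ → ℝ) :
    SCP n (fun i : Fin n ↦ y i) = ((∑ i ∈ range n, 1 / y i) / n)⁻¹ := by
  rw [SCP, inv_div, Fin.sum_univ_eq_sum_range (fun i ↦ 1 / y i)]

lemma tendsto_iInf_fin_of_forall_le {y : ℕ → ℝ} {a : ℝ} (hle : ∀ i, a ≤ y i)
    (hclose : ∀ ε > 0, ∃ i, y i < a + ε) :
    Tendsto (fun n ↦ ⨅ i : Fin n, y i) atTop (𝓝 a) := by
  refine tendsto_order.2 ⟨fun b hb ↦ ?_, fun b hb ↦ ?_⟩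
  · filter_upwards [eventually_ge_atTop 1] with n hn
    have : Nonempty (Fin n) := ⟨⟨0, hn⟩⟩
    exact hb.trans_le (le_ciInf fun i ↦ hle i)
  · obtain ⟨i, hi⟩ := hclose (b - a) (sub_pos.2 hb)
    filter_upwards [eventually_gt_atTop i] with n hn
    calc ⨅ k : Fin n, y k ≤ y (⟨i, hn⟩ : Fin n) := ciInf_le (Finite.bddBelow_range _) _
      _ < b := by simpa using hi

section Probability

variable {Ω : Type*} [MeasurableSpace Ω] {μ : Measure Ω}

lemma le_liminf_integral_of_ae_tendsto [IsProbabilityMeasure μ] {g : ℕ → Ω → ℝ} {L : ℝ}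
    (hg : ∀ n, Integrable (g n) μ) (hg0 : ∀ n, 0 ≤ᵐ[μ] g n)
    (hlim : ∀ᵐ ω ∂μ, Tendsto (fun n ↦ g n ω) atTop (𝓝 L))
    (hbdd : IsBoundedUnder (· ≤ ·) atTop fun n ↦ ∫ ω, g n ω ∂μ) :
    L ≤ liminf (fun n ↦ ∫ ω, g n ω ∂μ) atTop := by
  have hdom : ∀ n, ∀ᵐ ω ∂μ, ‖min (g n ω) L‖ ≤ |L| := fun n ↦ by
    filter_upwards [hg0 n] with ω (hω : 0 ≤ g n ω)
    rw [Real.norm_eq_abs, abs_le]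
    constructor
    · exact le_min (by linarith [abs_nonneg L]) (neg_abs_le L)
    · exact (min_le_right _ _).trans (le_abs_self L)
  have htrunc : Tendsto (fun n ↦ ∫ ω, min (g n ω) L ∂μ) atTop (𝓝 L) := by
    simpa using tendsto_integral_of_dominated_convergence (f := fun _ ↦ L) (fun _ ↦ |L|)
      (fun n ↦ (hg n).aestronglyMeasurable.inf aestronglyMeasurable_const) (integrable_const _)
      hdom (hlim.mono fun ω hω ↦ by simpa using hω.min (tendsto_const_nhds (x := L)))
  rw [← htrunc.liminf_eq]
  refine liminf_le_liminf (Eventually.of_forall fun n ↦ ?_) htrunc.isBoundedUnder_ge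
    hbdd.isCoboundedUnder_ge
  exact integral_mono ((hg n).inf (integrable_const L)) (hg n) fun ω ↦ min_le_left _ _

lemma ae_le_of_map_Iio_eq_zero {Z : Ω → ℝ} (hZ : Measurable Z) {a : ℝ}
    (h : μ.map Z (Iio a) = 0) : ∀ᵐ ω ∂μ, a ≤ Z ω :=
  ae_of_ae_map hZ.aemeasurable (by rw [ae_iff]; simp only [not_le]; exact h)

lemma ProbabilityTheory.iIndepFun.iIndepSet_preimage {ι β : Type*} [MeasurableSpace β]
    {f : ι → Ω → β} (hf : iIndepFun f μ) (hmeas : ∀ i, Measurable (f i)) {s : Set β}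
    (hs : MeasurableSet s) : iIndepSet (fun i ↦ f i ⁻¹' s) μ :=
  (iIndepSet_iff_meas_biInter fun i ↦ hmeas i hs).2 fun S ↦
    hf.measure_inter_preimage_eq_mul S fun _ _ ↦ hs

lemma ae_frequently_mem_of_iIndepFun {β : Type*} [MeasurableSpace β] {Y : ℕ → Ω → β}
    {ν : Measure β} (hmeas : ∀ i, Measurable (Y i)) (hindep : iIndepFun Y μ)
    (hdist : ∀ i, μ.map (Y i) = ν) {s : Set β} (hs : MeasurableSet s) (hνs : ν s ≠ 0) :
    ∀ᵐ ω ∂μ, ∃ᶠ i in atTop, Y i ω ∈ s := by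
  have := hindep.isProbabilityMeasure
  have hsum : ∑' i, μ (Y i ⁻¹' s) = ⊤ := by
    simp_rw [← Measure.map_apply (hmeas _) hs, hdist]
    exact ENNReal.tsum_const_eq_top_of_ne_zero hνs
  have hlimsup := measure_limsup_eq_one (fun i ↦ hmeas i hs) (hindep.iIndepSet_preimage hmeas hs)
    hsum
  have hae := (mem_ae_iff_prob_eq_one
    (MeasurableSet.measurableSet_limsup fun i ↦ hmeas i hs)).2 hlimsup
  filter_upwards [hae] with ω hω using mem_limsup_iff_frequently_mem.1 hω

lemma mul_measureReal_sum_le_half_mean_le [IsProbabilityMeasure μ] {B : ℕ → Ω → ℝ} {p : ℝ}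
    (hp : 0 < p) (hmeas : ∀ i, Measurable (B i)) (hbdd : ∀ i ω, B i ω ∈ Icc (0 : ℝ) 1)
    (hindep : Pairwise fun i j ↦ B i ⟂ᵢ[μ] B j) (hmean : ∀ i, μ[B i] = p) (n : ℕ) :
    n * μ.real {ω | ∑ i ∈ range n, B i ω ≤ p * n / 2} ≤ 1 / p ^ 2 := by
  rcases Nat.eq_zero_or_pos n with rfl | hn
  · simp only [CharP.cast_eq_zero, zero_mul]
    positivity
  have hL2 : ∀ i, MemLp (B i) 2 μ := fun i ↦
    memLp_of_bounded (ae_of_all _ (hbdd i)) (hmeas i).aestronglyMeasurable 2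
  set S := ∑ i ∈ range n, B i
  have hSω : ∀ ω, S ω = ∑ i ∈ range n, B i ω := fun ω ↦ Finset.sum_apply ω _ _
  have hSmean : μ[S] = n * p := by
    simp_rw [hSω]
    rw [integral_finsetSum _ fun i _ ↦ (hL2 i).integrable one_le_two]
    simp [hmean]
  have hSvar : variance S μ ≤ n / 4 := by
    rw [IndepFun.variance_sum (fun i _ ↦ hL2 i) fun i _ j _ hij ↦ hindep hij]
    calc ∑ i ∈ range n, variance (B i) μ ≤ ∑ _i ∈ range n, ((1 - 0) / 2 : ℝ) ^ 2 :=
          sum_le_sum fun i _ ↦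
            variance_le_sq_of_bounded (ae_of_all _ (hbdd i)) (hmeas i).aemeasurable
      _ = n / 4 := by simp only [sum_const, card_range, nsmul_eq_mul]; ring
  have hε : 0 < p * n / 2 := by positivity
  have hsub : {ω | ∑ i ∈ range n, B i ω ≤ p * n / 2} ⊆ {ω | p * n / 2 ≤ |S ω - μ[S]|} := by
    intro ω (hω : ∑ i ∈ range n, B i ω ≤ p * n / 2)
    show p * n / 2 ≤ |S ω - μ[S]|
    rw [hSmean, hSω, abs_sub_comm, abs_of_nonneg (by linarith)]
    linarith
  have hcheb := meas_ge_le_variance_div_sq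
    (memLp_finsetSum' (range n) fun i _ ↦ hL2 i : MemLp S 2 μ) hε
  calc n * μ.real {ω | ∑ i ∈ range n, B i ω ≤ p * n / 2}
      ≤ n * (variance S μ / (p * n / 2) ^ 2) := by
        gcongr
        exact (measureReal_mono hsub).trans
          (ENNReal.toReal_le_of_le_ofReal (div_nonneg (variance_nonneg _ _) (sq_nonneg _)) hcheb)
    _ ≤ n * ((n / 4) / (p * n / 2) ^ 2) := by gcongr
    _ = 1 / p ^ 2 := by field_simp; ring

section IID

variable {Y : ℕ → Ω → ℝ} {ν : Measure ℝ}

lemma integrable_one_div_of_measure_Iio_eq_zero [IsFiniteMeasure ν] {a : ℝ} (ha : 0 < a)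
    (hlow : ν (Iio a) = 0) : Integrable (fun t ↦ 1 / t) ν := by
  refine Integrable.mono' (integrable_const a⁻¹) (by fun_prop) ?_
  rw [ae_iff]
  refine measure_mono_null (fun t ht ↦ ?_) hlow
  by_contra hat
  have hat : a ≤ t := not_lt.1 hat
  apply ht
  rw [Real.norm_eq_abs, abs_of_pos (one_div_pos.2 (ha.trans_le hat)), one_div]
  exact inv_anti₀ ha hat

lemma integral_one_div_pos [IsProbabilityMeasure ν] {a : ℝ} (ha : 0 < a) (hlow : ν (Iio a) = 0) :
    0 < ∫ t, 1 / t ∂ν := by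
  have hpos : ∀ᵐ t ∂ν, 0 < 1 / t := by
    have hae : ∀ᵐ t ∂ν, a ≤ t := by rw [ae_iff]; simp only [not_le]; exact hlow
    exact hae.mono fun t ht ↦ one_div_pos.2 (ha.trans_le ht)
  refine (integral_pos_iff_support_of_nonneg_ae (hpos.mono fun t ht ↦ ht.le)
    (integrable_one_div_of_measure_Iio_eq_zero ha hlow)).2 (pos_iff_ne_zero.2 fun h0 ↦ ?_)
  have hzero : ∀ᵐ t ∂ν, 1 / t = 0 := by rw [ae_iff]; exact h0
  obtain ⟨t, ht, ht0⟩ := (hpos.and hzero).exists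
  exact ht.ne' ht0

lemma ae_tendsto_SCP (hmeas : ∀ i, Measurable (Y i)) (hindep : iIndepFun Y μ)
    (hdist : ∀ i, μ.map (Y i) = ν) {a : ℝ} (ha : 0 < a) (hlow : ν (Iio a) = 0) :
    ∀ᵐ ω ∂μ, Tendsto (fun n ↦ SCP n fun i : Fin n ↦ Y i ω) atTop (𝓝 (∫ t, 1 / t ∂ν)⁻¹) := by
  have := hindep.isProbabilityMeasure
  have : IsProbabilityMeasure ν := hdist 0 ▸ Measure.isProbabilityMeasure_map (hmeas 0).aemeasurable
  have hint : Integrable (fun ω ↦ 1 / Y 0 ω) μ :=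
    (hdist 0 ▸ integrable_one_div_of_measure_Iio_eq_zero ha hlow).comp_measurable (hmeas 0)
  have hmean : μ[fun ω ↦ 1 / Y 0 ω] = ∫ t, 1 / t ∂ν := by
    rw [← hdist 0, integral_map (hmeas 0).aemeasurable (by fun_prop)]
  have hslln := strong_law_ae_real (fun i ω ↦ 1 / Y i ω) hint
    (fun i j hij ↦ (hindep.indepFun hij).comp (by fun_prop) (by fun_prop))
    (fun i ↦ (IdentDistrib.mk (hmeas i).aemeasurable (hmeas 0).aemeasurable
      (by rw [hdist, hdist])).comp (u := fun t ↦ 1 / t) (by fun_prop))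
  filter_upwards [hslln] with ω hω
  rw [hmean] at hω
  exact (hω.inv₀ (integral_one_div_pos ha hlow).ne').congr fun n ↦
    (SCP_eq_inv_average n fun i ↦ Y i ω).symm

lemma ae_tendsto_iInf_fin (hmeas : ∀ i, Measurable (Y i)) (hindep : iIndepFun Y μ)
    (hdist : ∀ i, μ.map (Y i) = ν) {a : ℝ} (hlow : ν (Iio a) = 0)
    (hnear : ∀ δ > 0, 0 < ν (Iic (a + δ))) :
    ∀ᵐ ω ∂μ, Tendsto (fun n ↦ ⨅ i : Fin n, Y i ω) atTop (𝓝 a) := by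
  have hle : ∀ᵐ ω ∂μ, ∀ i, a ≤ Y i ω :=
    ae_all_iff.2 fun i ↦ ae_le_of_map_Iio_eq_zero (hmeas i) (by rw [hdist]; exact hlow)
  have hclose : ∀ᵐ ω ∂μ, ∀ k : ℕ, ∃ i, Y i ω ∈ Iic (a + 1 / (k + 1)) :=
    ae_all_iff.2 fun k ↦ by
      have hk : (0 : ℝ) < 1 / (k + 1) := Nat.one_div_pos_of_nat
      filter_upwards [ae_frequently_mem_of_iIndepFun hmeas hindep hdist measurableSet_Iic
        (hnear _ hk).ne'] with ω hω using hω.exists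
  filter_upwards [hle, hclose] with ω hle hclose
  refine tendsto_iInf_fin_of_forall_le (y := fun i ↦ Y i ω) hle fun ε hε ↦ ?_
  obtain ⟨k, hk⟩ := exists_nat_one_div_lt hε
  obtain ⟨i, hi⟩ := hclose k
  exact ⟨i, (mem_Iic.1 hi).trans_lt (add_lt_add_right hk a)⟩

lemma mul_measureReal_count_le (hmeas : ∀ i, Measurable (Y i)) (hindep : iIndepFun Y μ)
    (hdist : ∀ i, μ.map (Y i) = ν) {c : ℝ} (hc : 0 < ν.real (Iic c)) (n : ℕ) :
    n * μ.real {ω | ∑ i : Fin n, (Iic c).indicator (1 : ℝ → ℝ) (Y i ω) ≤ ν.real (Iic c) * n / 2}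
      ≤ 1 / ν.real (Iic c) ^ 2 := by
  have := hindep.isProbabilityMeasure
  have hφ : Measurable ((Iic c).indicator (1 : ℝ → ℝ)) := measurable_one.indicator measurableSet_Iic
  have hset : {ω | ∑ i : Fin n, (Iic c).indicator (1 : ℝ → ℝ) (Y i ω) ≤ ν.real (Iic c) * n / 2}
      = {ω | ∑ i ∈ range n, (Iic c).indicator (1 : ℝ → ℝ) (Y i ω) ≤ ν.real (Iic c) * n / 2} := by
    ext ω
    show _ ≤ (_ : ℝ) ↔ _ ≤ (_ : ℝ)
    rw [Fin.sum_univ_eq_sum_range (fun i ↦ (Iic c).indicator (1 : ℝ → ℝ) (Y i ω))]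
  rw [hset]
  refine mul_measureReal_sum_le_half_mean_le hc (fun i ↦ hφ.comp (hmeas i)) (fun i ω ↦ ?_)
    (fun i j hij ↦ (hindep.indepFun hij).comp hφ hφ) (fun i ↦ ?_) n
  · by_cases h : Y i ω ∈ Iic c <;> simp [h]
  · show ∫ ω, (Iic c).indicator 1 (Y i ω) ∂μ = _
    rw [← integral_map (hmeas i).aemeasurable hφ.aestronglyMeasurable, hdist,
      integral_indicator_one measurableSet_Iic]

end IID

end Probability

section MechanismP

variable {Ω : Type*} {m : ℕ} {X : ℕ → Fin m → Ω → ℝ} {tmin : Fin m → ℝ}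

noncomputable def ratioP (X : ℕ → Fin m → Ω → ℝ) (n : ℕ) (ω : Ω) : ℝ :=
  (∑ j, SCP n fun i : Fin n ↦ X i j ω) / ∑ j, ⨅ i : Fin n, X i j ω

lemma ratioP_nonneg {n : ℕ} {ω : Ω} (hX : ∀ i j, 0 < X i j ω) : 0 ≤ ratioP X n ω :=
  div_nonneg (sum_nonneg fun j _ ↦ SCP_nonneg fun i ↦ (hX i j).le)
    (sum_nonneg fun j _ ↦ Real.iInf_nonneg fun i ↦ (hX i j).le)

lemma ratioP_le {n : ℕ} {ω : Ω} (hX : ∀ i j, 0 < X i j ω) : ratioP X n ω ≤ n :=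
  div_le_of_le_mul₀ (sum_nonneg fun j _ ↦ Real.iInf_nonneg fun i ↦ (hX i j).le) n.cast_nonneg
    (by rw [mul_sum]; exact sum_le_sum fun j _ ↦ SCP_le_mul_iInf fun i ↦ hX i j)

lemma ratioP_le_sum_add_indicator {n : ℕ} (hn : 0 < n) {ω : Ω} {c p : Fin m → ℝ}
    (htmin : ∀ j, 0 < tmin j) (hT : 0 < ∑ j, tmin j) (hX : ∀ i j, tmin j ≤ X i j ω)
    (hc : ∀ j, 0 < c j) (hp : ∀ j, 0 < p j) :
    ratioP X n ω ≤ ∑ j, (2 * c j / (p j * ∑ j, tmin j) + (Iic (p j * n / 2)).indicator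
      (fun _ ↦ (n : ℝ)) (∑ i : Fin n, (Iic (c j)).indicator (1 : ℝ → ℝ) (X i j ω))) := by
  have : Nonempty (Fin n) := ⟨⟨0, hn⟩⟩
  have hmin : ∀ j, tmin j ≤ ⨅ i : Fin n, X i j ω := fun j ↦ le_ciInf fun i ↦ hX i j
  rw [ratioP, sum_div]
  refine sum_le_sum fun j _ ↦ SCP_div_le (fun i ↦ (htmin j).trans_le (hX i j)) (hc j) (hp j) hT
    (sum_le_sum fun j _ ↦ hmin j) ?_
  exact single_le_sum (f := fun j ↦ ⨅ i : Fin n, X i j ω) (fun j _ ↦ (htmin j).le.trans (hmin j))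
    (mem_univ j)

variable [MeasurableSpace Ω] {μ : Measure Ω} {D : Fin m → Measure ℝ}

lemma measurable_ratioP (hmeas : ∀ i j, Measurable (X i j)) (n : ℕ) :
    Measurable (ratioP X n) := by
  unfold ratioP SCP
  fun_prop

lemma integrable_ratioP [IsFiniteMeasure μ] (hmeas : ∀ i j, Measurable (X i j))
    (hX : ∀ᵐ ω ∂μ, ∀ i j, 0 < X i j ω) (n : ℕ) : Integrable (ratioP X n) μ :=
  (integrable_const (n : ℝ)).mono' (measurable_ratioP hmeas n).aestronglyMeasurable
    (hX.mono fun ω hω ↦ by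
      rw [Real.norm_eq_abs, abs_of_nonneg (ratioP_nonneg hω)]
      exact ratioP_le hω)

lemma integral_ratioP_le [IsProbabilityMeasure μ] {n : ℕ} (hn : 0 < n) {c p : Fin m → ℝ}
    (hmeas : ∀ i j, Measurable (X i j)) (htmin : ∀ j, 0 < tmin j) (hT : 0 < ∑ j, tmin j)
    (hX : ∀ᵐ ω ∂μ, ∀ i j, tmin j ≤ X i j ω) (hc : ∀ j, 0 < c j) (hp : ∀ j, 0 < p j) :
    ∫ ω, ratioP X n ω ∂μ ≤ ∑ j, (2 * c j / (p j * ∑ j, tmin j) + n *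
      μ.real {ω | ∑ i : Fin n, (Iic (c j)).indicator (1 : ℝ → ℝ) (X i j ω) ≤ p j * n / 2}) := by
  set T := ∑ j, tmin j
  set A := fun j ↦
    {ω | ∑ i : Fin n, (Iic (c j)).indicator (1 : ℝ → ℝ) (X i j ω) ≤ p j * n / 2}
  have hA : ∀ j, MeasurableSet (A j) := fun j ↦ measurableSet_le
    (Finset.measurable_sum _ fun i _ ↦
      (measurable_one.indicator measurableSet_Iic).comp (hmeas i j))
    measurable_const
  have hint : ∀ j,
      Integrable (fun ω ↦ 2 * c j / (p j * T) + (A j).indicator (fun _ ↦ (n : ℝ)) ω) μ :=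
    fun j ↦ (integrable_const _).add ((integrable_const _).indicator (hA j))
  have hpos : ∀ᵐ ω ∂μ, ∀ i j, 0 < X i j ω := hX.mono fun ω h i j ↦ (htmin j).trans_le (h i j)
  calc ∫ ω, ratioP X n ω ∂μ
      ≤ ∫ ω, ∑ j, (2 * c j / (p j * T) + (A j).indicator (fun _ ↦ (n : ℝ)) ω) ∂μ :=
        integral_mono_ae (integrable_ratioP hmeas hpos n)
          (integrable_finsetSum _ fun j _ ↦ hint j)
          (hX.mono fun ω h ↦ ratioP_le_sum_add_indicator hn htmin hT h hc hp)
    _ = ∑ j, (2 * c j / (p j * T) + n * μ.real (A j)) := by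
        rw [integral_finsetSum _ fun j _ ↦ hint j]
        refine sum_congr rfl fun j _ ↦ ?_
        rw [integral_add (integrable_const _) ((integrable_const _).indicator (hA j)),
          integral_const, integral_indicator_const _ (hA j)]
        simp [mul_comm]

lemma isBoundedUnder_integral_ratioP [IsProbabilityMeasure μ]
    (hmeas : ∀ i j, Measurable (X i j)) (hindep : iIndepFun (fun p : ℕ × Fin m ↦ X p.1 p.2) μ)
    (hdist : ∀ i j, μ.map (X i j) = D j) (htmin : ∀ j, 0 < tmin j) (hT : 0 < ∑ j, tmin j)
    (hX : ∀ᵐ ω ∂μ, ∀ i j, tmin j ≤ X i j ω) (hcdf : ∀ j, 0 < D j (Iic (tmin j + 1))) :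
    IsBoundedUnder (· ≤ ·) atTop fun n ↦ ∫ ω, ratioP X n ω ∂μ := by
  set c := fun j ↦ tmin j + 1
  set p := fun j ↦ (D j).real (Iic (c j))
  have hc : ∀ j, 0 < c j := fun j ↦ by linarith [htmin j]
  have hp : ∀ j, 0 < p j := fun j ↦ by
    have : IsFiniteMeasure (D j) := hdist 0 j ▸ inferInstance
    exact ENNReal.toReal_pos (hcdf j).ne' (measure_ne_top _ _)
  refine isBoundedUnder_of ⟨∑ j, (2 * c j / (p j * ∑ j, tmin j) + 1 / p j ^ 2), fun n ↦ ?_⟩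
  rcases Nat.eq_zero_or_pos n with rfl | hn
  · simpa [ratioP, SCP] using
      sum_nonneg fun j _ ↦ by have := hc j; have := hp j; positivity
  refine (integral_ratioP_le hn hmeas htmin hT hX hc hp).trans (sum_le_sum fun j _ ↦ ?_)
  gcongr
  exact mul_measureReal_count_le (fun i ↦ hmeas i j) (hindep.precomp (Prod.mk_left_injective j))
    (fun i ↦ hdist i j) (hp j) n

lemma ae_tendsto_ratioP (hmeas : ∀ i j, Measurable (X i j))
    (hindep : iIndepFun (fun p : ℕ × Fin m ↦ X p.1 p.2) μ) (hdist : ∀ i j, μ.map (X i j) = D j)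
    (htmin : ∀ j, 0 < tmin j) (hT : ∑ j, tmin j ≠ 0) (hsupp : ∀ j, D j (Iio (tmin j)) = 0)
    (hcdf : ∀ j, ∀ δ : ℝ, 0 < δ → 0 < D j (Iic (tmin j + δ))) :
    ∀ᵐ ω ∂μ, Tendsto (fun n ↦ ratioP X n ω) atTop
      (𝓝 ((∑ j, (∫ t, 1 / t ∂(D j))⁻¹) / ∑ j, tmin j)) := by
  have hcol : ∀ j, iIndepFun (fun i ↦ X i j) μ := fun j ↦
    hindep.precomp (Prod.mk_left_injective j)
  filter_upwards [ae_all_iff.2 fun j ↦ ae_tendsto_SCP (fun i ↦ hmeas i j) (hcol j)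
      (fun i ↦ hdist i j) (htmin j) (hsupp j),
    ae_all_iff.2 fun j ↦ ae_tendsto_iInf_fin (fun i ↦ hmeas i j) (hcol j) (fun i ↦ hdist i j)
      (hsupp j) (hcdf j)] with ω hSCP hmin
  exact (tendsto_finsetSum _ fun j _ ↦ hSCP j).div (tendsto_finsetSum _ fun j _ ↦ hmin j) hT

end MechanismP

theorem mechanismP_average_ratio_liminf_ge_general
    {Ω : Type*} [MeasureSpace Ω] [IsProbabilityMeasure (ℙ : Measure Ω)]
    (m : ℕ) (hm : 1 ≤ m)
    (tmin : Fin m → ℝ) (htmin : ∀ j, 0 < tmin j)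
    (D : Fin m → Measure ℝ)
    (hsupp : ∀ j, D j (Set.Iio (tmin j)) = 0)
    (hcdf : ∀ j, ∀ δ : ℝ, 0 < δ → 0 < D j (Set.Iic (tmin j + δ)))
    (X : ℕ → Fin m → Ω → ℝ)
    (hmeas : ∀ i j, Measurable (X i j))
    (hindep : iIndepFun (fun p : ℕ × Fin m => X p.1 p.2) ℙ)
    (hdist : ∀ i j, Measure.map (X i j) ℙ = D j)
    (r : ℕ → ℝ)
    (hr : ∀ n, r n = ∫ ω, (∑ j, SCP n (fun i : Fin n => X i j ω)) /
        (∑ j, ⨅ i : Fin n, X i j ω) ∂ℙ) :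
    (∑ j, (∫ t, 1 / t ∂(D j))⁻¹) / (∑ j, tmin j) ≤ liminf r atTop := by
  have hT : 0 < ∑ j, tmin j := sum_pos (fun j _ ↦ htmin j) ⟨⟨0, hm⟩, mem_univ _⟩
  have hX : ∀ᵐ ω ∂ℙ, ∀ i j, tmin j ≤ X i j ω := ae_all_iff.2 fun i ↦ ae_all_iff.2 fun j ↦
    ae_le_of_map_Iio_eq_zero (hmeas i j) (by rw [hdist]; exact hsupp j)
  have hpos : ∀ᵐ ω ∂ℙ, ∀ i j, 0 < X i j ω := hX.mono fun ω h i j ↦ (htmin j).trans_le (h i j)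
  rw [show r = fun n ↦ ∫ ω, ratioP X n ω ∂ℙ from funext hr]
  exact le_liminf_integral_of_ae_tendsto (integrable_ratioP hmeas hpos)
    (fun n ↦ hpos.mono fun ω h ↦ ratioP_nonneg h)
    (ae_tendsto_ratioP hmeas hindep hdist htmin hT.ne' hsupp hcdf)
    (isBoundedUnder_integral_ratioP hmeas hindep hdist htmin hT hX fun j ↦ hcdf j 1 one_pos)

/-- With `m ≥ 1` tasks, costs `X i j ∼ D j` mutually independent, `D j` a
probability distribution on `[tmin j, ∞)` whose CDF is positive just above `tmin j`, the
average-case approximation ratio `r_n(P) = E[(∑_j SC_P(t^j)) / (∑_j min_i t_i^j)]` of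
mechanism P satisfies `liminf_{n→∞} r_n(P) ≥ (∑_j (E_{t∼D^j}[1/t])⁻¹) / (∑_j tmin j)`. -/
theorem mechanismP_average_ratio_liminf_ge
    {Ω : Type*} [MeasureSpace Ω] [IsProbabilityMeasure (ℙ : Measure Ω)]
    (m : ℕ) (hm : 1 ≤ m)
    (tmin : Fin m → ℝ) (htmin : ∀ j, 0 < tmin j)
    (D : Fin m → Measure ℝ) (hprob : ∀ j, IsProbabilityMeasure (D j))
    (hsupp : ∀ j, D j (Set.Iio (tmin j)) = 0)
    (hcdf : ∀ j, ∀ δ : ℝ, 0 < δ → 0 < D j (Set.Iic (tmin j + δ)))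
    (X : ℕ → Fin m → Ω → ℝ)
    (hmeas : ∀ i j, Measurable (X i j))
    (hindep : iIndepFun (fun p : ℕ × Fin m => X p.1 p.2) ℙ)
    (hdist : ∀ i j, Measure.map (X i j) ℙ = D j)
    (r : ℕ → ℝ)
    (hr : ∀ n, r n = ∫ ω, (∑ j, SCP n (fun i : Fin n => X i j ω)) /
        (∑ j, ⨅ i : Fin n, X i j ω) ∂ℙ) :
    (∑ j, (∫ t, 1 / t ∂(D j))⁻¹) / (∑ j, tmin j) ≤ liminf r atTop :=
  mechanismP_average_ratio_liminf_ge_general m hm tmin htmin D hsupp hcdf X hmeas hindep hdist r hr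
end
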